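/- Under the third-moment conditions, D(Q_α‖P) is twice differentiable in α ∈ (0,1), with d²/dα² D(Q_α‖P) = Var(L_α) − (1−α)·𝔼[(L_α − 𝔼L_α)³], where L_α = log(dP/dQ)(X^{(α)}) and X^{(α)} ∼ Q_α. -/

import Mathlib

open MeasureTheory Real Set

noncomputable def Zfun {A : Type*} [MeasurableSpace A] (μ : Measure A) (p q : A → ℝ) (a : ℝ) : ℝ :=
  ∫ x, p x ^ a * q x ^ (1-a) ∂μ

/-- Density of the tilted measure `Q_α`. -/
noncomputable def qdens {A : Type*} [MeasurableSpace A] (μ : Measure A) (p q : A → ℝ) (a : ℝ) (x : A) : ℝ :=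
  p x ^ a * q x ^ (1-a) / Zfun μ p q a

/-- `D(Q_α ‖ P)`. -/
noncomputable def DtiltP {A : Type*} [MeasurableSpace A] (μ : Measure A) (p q : A → ℝ) (a : ℝ) : ℝ :=
  ∫ x, qdens μ p q a x * Real.log (qdens μ p q a x / p x) ∂μ

/-- `D(Q_α ‖ Q)`. -/
noncomputable def DtiltQ {A : Type*} [MeasurableSpace A] (μ : Measure A) (p q : A → ℝ) (a : ℝ) : ℝ :=
  ∫ x, qdens μ p q a x * Real.log (qdens μ p q a x / q x) ∂μ

/-- Mean of the log-likelihood ratio `log(p/q)` under `Q_α`. -/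
noncomputable def tiltMean {A : Type*} [MeasurableSpace A] (μ : Measure A) (p q : A → ℝ) (a : ℝ) : ℝ :=
  ∫ x, qdens μ p q a x * Real.log (p x / q x) ∂μ

/-- Variance of `log(p/q)` under `Q_α`. -/
noncomputable def tiltVar {A : Type*} [MeasurableSpace A] (μ : Measure A) (p q : A → ℝ) (a : ℝ) : ℝ :=
  (∫ x, qdens μ p q a x * (Real.log (p x / q x))^2 ∂μ) - (tiltMean μ p q a)^2

/-- Third central moment of `log(p/q)` under `Q_α`. -/
noncomputable def tiltM3 {A : Type*} [MeasurableSpace A] (μ : Measure A) (p q : A → ℝ) (a : ℝ) : ℝ :=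
  ∫ x, qdens μ p q a x * (Real.log (p x / q x) - tiltMean μ p q a)^3 ∂μ

/-- Absolute third central moment of `log(p/q)` under `Q_α`. -/
noncomputable def tiltM3abs {A : Type*} [MeasurableSpace A] (μ : Measure A) (p q : A → ℝ) (a : ℝ) : ℝ :=
  ∫ x, qdens μ p q a x * |Real.log (p x / q x) - tiltMean μ p q a|^3 ∂μ

/-!
With `ℓ = log (p/q)` and `Z_k(α) = ∫ p^α q^(1-α) ℓ^k`, the bound
`p^α q^(1-α) |ℓ|^k ≤ (p + q)(1 + |ℓ|³)` for `k ≤ 3` lets us differentiate under the integral: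
`Z_k' = Z_(k+1)` for `k < 3`. Hence the `Q_α`-moments `m_k = Z_k / Z_0` satisfy
`m_k' = m_(k+1) - m_k m_1`. Since `log (dQ_α/dP) = -(1-α) ℓ - log Z_0`, we get
`D(Q_α‖P) = -(1-α) m_1 - log Z_0`, whence `D' = -(1-α) Var` and, as
`Var' = m_3 - 3 m_1 m_2 + 2 m_1³` is the third central moment, `D'' = Var - (1-α) M₃`.
-/

open Filter Topology

section Pointwise

variable {x y a : ℝ}

lemma rpow_mul_rpow_one_sub_le_add (hx : 0 ≤ x) (hy : 0 ≤ y) (ha : a ∈ Icc (0:ℝ) 1) :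
    x ^ a * y ^ (1 - a) ≤ x + y := by
  have hx' := mul_nonneg (sub_nonneg.2 ha.2) hx
  have hy' := mul_nonneg ha.1 hy
  linarith [geom_mean_le_arith_mean2_weighted ha.1 (sub_nonneg.2 ha.2) hx hy (add_sub_cancel a 1)]

lemma rpow_mul_rpow_one_sub_eq_zero_iff (hx : 0 ≤ x) (hy : 0 ≤ y) (ha : a ∈ Ioo (0:ℝ) 1) :
    x ^ a * y ^ (1 - a) = 0 ↔ x * y = 0 := by
  simp only [mul_eq_zero, rpow_eq_zero hx ha.1.ne', rpow_eq_zero hy (sub_pos.2 ha.2).ne']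

lemma hasDerivAt_rpow_mul_rpow_one_sub (hx : 0 ≤ x) (hy : 0 ≤ y) (ha : a ∈ Ioo (0:ℝ) 1) :
    HasDerivAt (fun b => x ^ b * y ^ (1 - b)) (x ^ a * y ^ (1 - a) * log (x / y)) a := by
  by_cases hxy : x * y = 0
  · have hzero : (fun b => x ^ b * y ^ (1 - b)) =ᶠ[𝓝 a] fun _ => 0 :=
      eventually_of_mem (Ioo_mem_nhds ha.1 ha.2) fun b hb =>
        (rpow_mul_rpow_one_sub_eq_zero_iff hx hy hb).2 hxy
    rw [(rpow_mul_rpow_one_sub_eq_zero_iff hx hy ha).2 hxy, zero_mul]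
    exact (hasDerivAt_const a 0).congr_of_eventuallyEq hzero
  have hx' : 0 < x := hx.lt_of_ne (by rintro rfl; simp at hxy)
  have hy' : 0 < y := hy.lt_of_ne (by rintro rfl; simp at hxy)
  have hxb : HasDerivAt (fun b => x ^ b) (x ^ a * log x) a :=
    (hasStrictDerivAt_const_rpow hx' a).hasDerivAt
  have hyb : HasDerivAt (fun b => y ^ (1 - b)) (y ^ (1 - a) * log y * -1) a :=
    (hasStrictDerivAt_const_rpow hy' (1 - a)).hasDerivAt.comp a ((hasDerivAt_id' a).const_sub 1)
  refine (hxb.mul hyb).congr_deriv ?_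
  rw [log_div hx'.ne' hy'.ne']
  ring

lemma pow_le_one_add_pow {t : ℝ} {k n : ℕ} (ht : 0 ≤ t) (hk : k ≤ n) : t ^ k ≤ 1 + t ^ n := by
  rcases le_total t 1 with h | h
  · linarith [pow_le_one₀ ht h (n := k), pow_nonneg ht n]
  · linarith [pow_le_pow_right₀ h hk]

lemma norm_rpow_mul_rpow_one_sub_mul_pow_le (hx : 0 ≤ x) (hy : 0 ≤ y) (ha : a ∈ Icc (0:ℝ) 1)
    {k n : ℕ} (hk : k ≤ n) (t : ℝ) :
    ‖x ^ a * y ^ (1 - a) * t ^ k‖ ≤ (x + y) * (1 + |t| ^ n) := by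
  rw [norm_mul, norm_pow, Real.norm_eq_abs, Real.norm_eq_abs, abs_of_nonneg (by positivity)]
  exact mul_le_mul (rpow_mul_rpow_one_sub_le_add hx hy ha) (pow_le_one_add_pow (abs_nonneg t) hk)
    (by positivity) (by positivity)

end Pointwise

section Tilt

variable {A : Type*} [MeasurableSpace A] {μ : Measure A} {p q : A → ℝ} {n k : ℕ} {a : ℝ}

lemma integral_mul_sub_pow {w f : A → ℝ} (c : ℝ) (n : ℕ)
    (hf : ∀ k ≤ n, Integrable (fun x => w x * f x ^ k) μ) :
    ∫ x, w x * (f x - c) ^ n ∂μ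
      = ∑ k ∈ Finset.range (n + 1), (-c) ^ (n - k) * n.choose k * ∫ x, w x * f x ^ k ∂μ := by
  have hexp (x : A) : w x * (f x - c) ^ n
      = ∑ k ∈ Finset.range (n + 1), (-c) ^ (n - k) * n.choose k * (w x * f x ^ k) := by
    rw [sub_eq_add_neg, add_pow, Finset.mul_sum]
    exact Finset.sum_congr rfl fun k _ => by ring
  simp_rw [hexp]
  rw [integral_finsetSum _ fun k hk =>
    (hf k (Nat.lt_succ_iff.1 (Finset.mem_range.1 hk))).const_mul _]
  simp_rw [integral_const_mul]

structure HasLogRatioMoment (μ : Measure A) (p q : A → ℝ) (n : ℕ) : Prop where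
  aemeasurable_left : AEMeasurable p μ
  aemeasurable_right : AEMeasurable q μ
  nonneg_left : ∀ x, 0 ≤ p x
  nonneg_right : ∀ x, 0 ≤ q x
  integrable_bound : Integrable (fun x => (p x + q x) * (1 + |log (p x / q x)| ^ n)) μ

lemma HasLogRatioMoment.of_integral_eq_one (hp0 : ∀ x, 0 ≤ p x) (hq0 : ∀ x, 0 ≤ q x)
    (hpint : ∫ x, p x ∂μ = 1) (hqint : ∫ x, q x ∂μ = 1)
    (hP : Integrable (fun x => p x * |log (p x / q x)| ^ n) μ)
    (hQ : Integrable (fun x => q x * |log (p x / q x)| ^ n) μ) :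
    HasLogRatioMoment μ p q n := by
  have hpi : Integrable p μ := .of_integral_ne_zero (by simp [hpint])
  have hqi : Integrable q μ := .of_integral_ne_zero (by simp [hqint])
  refine ⟨hpi.aemeasurable, hqi.aemeasurable, hp0, hq0, ?_⟩
  refine ((hpi.add hqi).add (hP.add hQ)).congr (ae_of_all _ fun x => ?_)
  simp only [Pi.add_apply]
  ring

noncomputable def tiltIntegral (μ : Measure A) (p q : A → ℝ) (k : ℕ) (a : ℝ) : ℝ :=
  ∫ x, p x ^ a * q x ^ (1 - a) * log (p x / q x) ^ k ∂μ

noncomputable def tiltMoment (μ : Measure A) (p q : A → ℝ) (k : ℕ) (a : ℝ) : ℝ :=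
  ∫ x, qdens μ p q a x * log (p x / q x) ^ k ∂μ

lemma Zfun_eq_tiltIntegral_zero : Zfun μ p q = tiltIntegral μ p q 0 := by
  funext a
  simp [Zfun, tiltIntegral]

lemma tiltMoment_eq_div : tiltMoment μ p q k a = tiltIntegral μ p q k a / Zfun μ p q a := by
  rw [tiltMoment, tiltIntegral, ← integral_div]
  simp only [qdens, div_mul_eq_mul_div]

lemma tiltMoment_zero (hZ : Zfun μ p q a ≠ 0) : tiltMoment μ p q 0 a = 1 := by
  rw [tiltMoment_eq_div, ← Zfun_eq_tiltIntegral_zero, div_self hZ]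

lemma qdens_mul_log_qdens_div (hp0 : ∀ x, 0 ≤ p x) (hq0 : ∀ x, 0 ≤ q x) (ha : a ∈ Ioo (0:ℝ) 1)
    (hZ : 0 < Zfun μ p q a) (x : A) :
    qdens μ p q a x * log (qdens μ p q a x / p x)
      = qdens μ p q a x * (-(1 - a) * log (p x / q x) - log (Zfun μ p q a)) := by
  by_cases hpq : p x * q x = 0
  · rw [qdens, (rpow_mul_rpow_one_sub_eq_zero_iff (hp0 x) (hq0 x) ha).2 hpq]
    simp
  have hpx : 0 < p x := (hp0 x).lt_of_ne fun h => hpq (by rw [← h, zero_mul])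
  have hqx : 0 < q x := (hq0 x).lt_of_ne fun h => hpq (by rw [← h, mul_zero])
  have hw : 0 < p x ^ a * q x ^ (1 - a) := mul_pos (rpow_pos_of_pos hpx a) (rpow_pos_of_pos hqx _)
  rw [qdens, log_div (div_pos hw hZ).ne' hpx.ne', log_div hw.ne' hZ.ne',
    log_mul (rpow_pos_of_pos hpx a).ne' (rpow_pos_of_pos hqx _).ne', log_rpow hpx, log_rpow hqx,
    log_div hpx.ne' hqx.ne']
  ring

lemma tiltMean_eq_tiltMoment : tiltMean μ p q a = tiltMoment μ p q 1 a := by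
  simp [tiltMean, tiltMoment]

lemma tiltVar_eq_tiltMoment :
    tiltVar μ p q a = tiltMoment μ p q 2 a - tiltMoment μ p q 1 a ^ 2 := by
  rw [tiltVar, tiltMean_eq_tiltMoment]
  rfl

namespace HasLogRatioMoment

lemma Zfun_nonneg (h : HasLogRatioMoment μ p q n) (a : ℝ) : 0 ≤ Zfun μ p q a :=
  integral_nonneg fun x =>
    mul_nonneg (rpow_nonneg (h.nonneg_left x) a) (rpow_nonneg (h.nonneg_right x) _)

lemma integrable_tilt (h : HasLogRatioMoment μ p q n) (ha : a ∈ Icc (0:ℝ) 1) (hk : k ≤ n) :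
    Integrable (fun x => p x ^ a * q x ^ (1 - a) * log (p x / q x) ^ k) μ := by
  have hlog := measurable_log.comp_aemeasurable (h.aemeasurable_left.div h.aemeasurable_right)
  refine h.integrable_bound.mono' ?_ (ae_of_all _ fun x =>
    norm_rpow_mul_rpow_one_sub_mul_pow_le (h.nonneg_left x) (h.nonneg_right x) ha hk _)
  exact (((h.aemeasurable_left.pow_const a).mul (h.aemeasurable_right.pow_const _)).mul
    (hlog.pow_const k)).aestronglyMeasurable

lemma integrable_qdens_mul (h : HasLogRatioMoment μ p q n) (ha : a ∈ Icc (0:ℝ) 1) (hk : k ≤ n) :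
    Integrable (fun x => qdens μ p q a x * log (p x / q x) ^ k) μ := by
  simpa only [qdens, div_mul_eq_mul_div] using (h.integrable_tilt ha hk).div_const (Zfun μ p q a)

lemma hasDerivAt_tiltIntegral (h : HasLogRatioMoment μ p q n) (hk : k < n) (ha : a ∈ Ioo (0:ℝ) 1) :
    HasDerivAt (tiltIntegral μ p q k) (tiltIntegral μ p q (k + 1) a) a := by
  obtain ⟨ε, hε, hball⟩ := Metric.isOpen_iff.1 isOpen_Ioo a ha
  have hmem (b : ℝ) (hb : b ∈ Metric.ball a ε) : b ∈ Icc (0:ℝ) 1 := Ioo_subset_Icc_self (hball hb)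
  refine (hasDerivAt_integral_of_dominated_loc_of_deriv_le (μ := μ)
    (F := fun b x => p x ^ b * q x ^ (1 - b) * log (p x / q x) ^ k)
    (F' := fun b x => p x ^ b * q x ^ (1 - b) * log (p x / q x) ^ (k + 1))
    (Metric.ball_mem_nhds a hε)
    (eventually_of_mem (Metric.ball_mem_nhds a hε) fun b hb =>
      (h.integrable_tilt (hmem b hb) hk.le).aestronglyMeasurable)
    (h.integrable_tilt (Ioo_subset_Icc_self ha) hk.le)
    (h.integrable_tilt (Ioo_subset_Icc_self ha) hk).aestronglyMeasurable
    (ae_of_all _ fun x b hb => norm_rpow_mul_rpow_one_sub_mul_pow_le (h.nonneg_left x)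
      (h.nonneg_right x) (hmem b hb) hk _)
    h.integrable_bound
    (ae_of_all _ fun x b hb => ?_)).2
  exact ((hasDerivAt_rpow_mul_rpow_one_sub (h.nonneg_left x) (h.nonneg_right x)
    (hball hb)).mul_const _).congr_deriv (by ring)

lemma hasDerivAt_Zfun (h : HasLogRatioMoment μ p q n) (hn : 0 < n) (ha : a ∈ Ioo (0:ℝ) 1) :
    HasDerivAt (Zfun μ p q) (tiltIntegral μ p q 1 a) a := by
  rw [Zfun_eq_tiltIntegral_zero]
  exact h.hasDerivAt_tiltIntegral hn ha

lemma hasDerivAt_tiltMoment (h : HasLogRatioMoment μ p q n) (hk : k < n) (ha : a ∈ Ioo (0:ℝ) 1)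
    (hZ : Zfun μ p q a ≠ 0) :
    HasDerivAt (tiltMoment μ p q k)
      (tiltMoment μ p q (k + 1) a - tiltMoment μ p q k a * tiltMoment μ p q 1 a) a := by
  have hquot := (h.hasDerivAt_tiltIntegral hk ha).div (h.hasDerivAt_Zfun (by omega) ha) hZ
  rw [show tiltMoment μ p q k = fun b => tiltIntegral μ p q k b / Zfun μ p q b from
    funext fun b => tiltMoment_eq_div]
  refine hquot.congr_deriv ?_
  simp only [tiltMoment_eq_div]
  field_simp

lemma Zfun_eq_zero_iff (h : HasLogRatioMoment μ p q n) (ha : a ∈ Ioo (0:ℝ) 1) :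
    Zfun μ p q a = 0 ↔ ∀ᵐ x ∂μ, p x * q x = 0 := by
  have hint : Integrable (fun x => p x ^ a * q x ^ (1 - a)) μ := by
    simpa using h.integrable_tilt (Ioo_subset_Icc_self ha) n.zero_le
  rw [Zfun, integral_eq_zero_iff_of_nonneg (fun x => mul_nonneg (rpow_nonneg (h.nonneg_left x) a)
    (rpow_nonneg (h.nonneg_right x) _)) hint]
  exact eventually_congr (ae_of_all _ fun x =>
    rpow_mul_rpow_one_sub_eq_zero_iff (h.nonneg_left x) (h.nonneg_right x) ha)

lemma tiltM3_eq (h : HasLogRatioMoment μ p q n) (hn : 3 ≤ n) (ha : a ∈ Icc (0:ℝ) 1)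
    (hZ : Zfun μ p q a ≠ 0) :
    tiltM3 μ p q a = tiltMoment μ p q 3 a - 3 * tiltMoment μ p q 1 a * tiltMoment μ p q 2 a
      + 2 * tiltMoment μ p q 1 a ^ 3 := by
  rw [tiltM3, integral_mul_sub_pow (w := qdens μ p q a) (f := fun x => log (p x / q x)) _ 3
    fun k hk => h.integrable_qdens_mul ha (hk.trans hn)]
  simp only [show ∀ k, ∫ x, qdens μ p q a x * log (p x / q x) ^ k ∂μ = tiltMoment μ p q k a
    from fun _ => rfl, Finset.sum_range_succ, Finset.sum_range_zero, tiltMoment_zero hZ,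
    tiltMean_eq_tiltMoment]
  norm_num
  ring

lemma hasDerivAt_tiltVar (h : HasLogRatioMoment μ p q n) (hn : 3 ≤ n) (ha : a ∈ Ioo (0:ℝ) 1)
    (hZ : Zfun μ p q a ≠ 0) :
    HasDerivAt (tiltVar μ p q) (tiltM3 μ p q a) a := by
  have hm1 := h.hasDerivAt_tiltMoment (k := 1) (by omega) ha hZ
  have hm2 := h.hasDerivAt_tiltMoment (k := 2) (by omega) ha hZ
  rw [show tiltVar μ p q = fun b => tiltMoment μ p q 2 b - tiltMoment μ p q 1 b ^ 2 from
    funext fun b => tiltVar_eq_tiltMoment]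
  refine (hm2.sub (hm1.pow 2)).congr_deriv ?_
  rw [h.tiltM3_eq hn (Ioo_subset_Icc_self ha) hZ]
  push_cast
  ring

lemma DtiltP_eq (h : HasLogRatioMoment μ p q n) (hn : 1 ≤ n) (ha : a ∈ Ioo (0:ℝ) 1)
    (hZ : 0 < Zfun μ p q a) :
    DtiltP μ p q a = -(1 - a) * tiltMoment μ p q 1 a - log (Zfun μ p q a) := by
  have hpt (x : A) : qdens μ p q a x * log (qdens μ p q a x / p x)
      = -(1 - a) * (qdens μ p q a x * log (p x / q x) ^ 1)
        - log (Zfun μ p q a) * (qdens μ p q a x * log (p x / q x) ^ 0) := by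
    rw [qdens_mul_log_qdens_div h.nonneg_left h.nonneg_right ha hZ]
    ring
  have hI (k : ℕ) (hk : k ≤ n) := h.integrable_qdens_mul (Ioo_subset_Icc_self ha) hk
  rw [DtiltP, integral_congr_ae (ae_of_all _ hpt),
    integral_sub ((hI 1 hn).const_mul _) ((hI 0 n.zero_le).const_mul _),
    integral_const_mul, integral_const_mul]
  change -(1 - a) * tiltMoment μ p q 1 a - log (Zfun μ p q a) * tiltMoment μ p q 0 a = _
  rw [tiltMoment_zero hZ.ne', mul_one]

lemma hasDerivAt_DtiltP (h : HasLogRatioMoment μ p q n) (hn : 2 ≤ n)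
    (hZ : ∀ b ∈ Ioo (0:ℝ) 1, 0 < Zfun μ p q b) (ha : a ∈ Ioo (0:ℝ) 1) :
    HasDerivAt (DtiltP μ p q) (-(1 - a) * tiltVar μ p q a) a := by
  have hD : DtiltP μ p q =ᶠ[𝓝 a] fun b => -(1 - b) * tiltMoment μ p q 1 b - log (Zfun μ p q b) :=
    eventually_of_mem (Ioo_mem_nhds ha.1 ha.2) fun b hb => h.DtiltP_eq (by omega) hb (hZ b hb)
  have hformula := (((hasDerivAt_id' a).const_sub 1).neg.mul
    (h.hasDerivAt_tiltMoment (k := 1) (by omega) ha (hZ a ha).ne')).sub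
    ((h.hasDerivAt_Zfun (by omega) ha).log (hZ a ha).ne')
  refine (hformula.congr_of_eventuallyEq hD).congr_deriv ?_
  rw [← tiltMoment_eq_div, tiltVar_eq_tiltMoment, Pi.neg_apply]
  ring

lemma hasDerivAt_deriv_DtiltP (h : HasLogRatioMoment μ p q n) (hn : 3 ≤ n)
    (hZ : ∀ b ∈ Ioo (0:ℝ) 1, 0 < Zfun μ p q b) (ha : a ∈ Ioo (0:ℝ) 1) :
    HasDerivAt (deriv (DtiltP μ p q)) (tiltVar μ p q a - (1 - a) * tiltM3 μ p q a) a := by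
  have hD' : deriv (DtiltP μ p q) =ᶠ[𝓝 a] fun b => -(1 - b) * tiltVar μ p q b :=
    eventually_of_mem (Ioo_mem_nhds ha.1 ha.2) fun b hb =>
      (h.hasDerivAt_DtiltP (by omega) hZ hb).deriv
  refine ((((hasDerivAt_id' a).const_sub 1).neg.mul
    (h.hasDerivAt_tiltVar hn ha (hZ a ha).ne')).congr_of_eventuallyEq hD').congr_deriv ?_
  rw [Pi.neg_apply]
  ring

end HasLogRatioMoment

/-- When `Z ≡ 0`, `qdens` is the junk value `0`, and so are all the quantities involved. -/
lemma hasDerivAt_deriv_DtiltP_of_Zfun_eq_zero (hZ : ∀ b ∈ Ioo (0:ℝ) 1, Zfun μ p q b = 0)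
    (ha : a ∈ Ioo (0:ℝ) 1) :
    HasDerivAt (deriv (DtiltP μ p q)) (tiltVar μ p q a - (1 - a) * tiltM3 μ p q a) a := by
  have hq (b : ℝ) (hb : b ∈ Ioo (0:ℝ) 1) : qdens μ p q b = 0 :=
    funext fun x => by simp [qdens, hZ b hb]
  have hD : DtiltP μ p q =ᶠ[𝓝 a] 0 :=
    eventually_of_mem (Ioo_mem_nhds ha.1 ha.2) fun b hb => by simp [DtiltP, hq b hb]
  have hD' : deriv (DtiltP μ p q) =ᶠ[𝓝 a] 0 :=
    hD.eventuallyEq_nhds.mono fun b hb => by simp [hb.deriv_eq]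
  simpa [tiltVar, tiltM3, tiltMean, hq a ha] using
    (hasDerivAt_const a (0:ℝ)).congr_of_eventuallyEq hD'

end Tilt

theorem DtiltP_second_deriv_general {A : Type*} [MeasurableSpace A]
    (μ : Measure A)
    (p q : A → ℝ)
    (hp0 : ∀ x, 0 ≤ p x) (hq0 : ∀ x, 0 ≤ q x)
    (hpint : ∫ x, p x ∂μ = 1) (hqint : ∫ x, q x ∂μ = 1)
    (hP3 : Integrable (fun x => p x * |Real.log (p x / q x)|^3) μ)
    (hQ3 : Integrable (fun x => q x * |Real.log (p x / q x)|^3) μ) :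
    ∀ α ∈ Set.Ioo (0:ℝ) 1,
      HasDerivAt (deriv (DtiltP μ p q))
        (tiltVar μ p q α - (1-α) * tiltM3 μ p q α) α := by
  intro α hα
  have h : HasLogRatioMoment μ p q 3 := .of_integral_eq_one hp0 hq0 hpint hqint hP3 hQ3
  by_cases hpq : ∀ᵐ x ∂μ, p x * q x = 0
  · exact hasDerivAt_deriv_DtiltP_of_Zfun_eq_zero (fun b hb => (h.Zfun_eq_zero_iff hb).2 hpq) hα
  · refine h.hasDerivAt_deriv_DtiltP le_rfl (fun b hb => ?_) hα
    exact (h.Zfun_nonneg b).lt_of_ne' (mt (h.Zfun_eq_zero_iff hb).1 hpq)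

theorem DtiltP_second_deriv {A : Type*} [MeasurableSpace A]
    (μ : Measure A) [SigmaFinite μ]
    (p q : A → ℝ) (hp : Measurable p) (hq : Measurable q)
    (hp0 : ∀ x, 0 ≤ p x) (hq0 : ∀ x, 0 ≤ q x)
    (hpint : ∫ x, p x ∂μ = 1) (hqint : ∫ x, q x ∂μ = 1)
    (hP3 : Integrable (fun x => p x * |Real.log (p x / q x)|^3) μ)
    (hQ3 : Integrable (fun x => q x * |Real.log (p x / q x)|^3) μ) :
    ∀ α ∈ Set.Ioo (0:ℝ) 1,
      HasDerivAt (deriv (DtiltP μ p q))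
        (tiltVar μ p q α - (1-α) * tiltM3 μ p q α) α :=
  DtiltP_second_deriv_general μ p q hp0 hq0 hpint hqint hP3 hQ3
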